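/- arXiv:1904.08350 — 2 statements merged into one kernel-verified Lean document; each statement's English description precedes it below -/
import Mathlib

section
/- Let Q be a commutative Noetherian local ring, g = g_1,...,g_s a regular sequence in Q, and M a finitely generated Q-module admitting a free resolution (F, ∂) such that Im ∂_i ⊆ (g)F_{i-1} for every i (a g-weak complete intersection module). Then for every ℓ, the ℓ-th Koszul homology H_ℓ(g; M) is isomorphic as a Q/(g)-module to F_ℓ ⊗_Q Q/(g), where F is the minimal free resolution of M. -/
/-!
Write `I = (g)` and `Ωᵏ` for the syzygies of `M` in the resolution `F`, so that there are short
exact sequences `0 → Ωᵏ⁺¹ → Fₖ → Ωᵏ → 0` with `Ω⁰ = M` and `Ωᵏ⁺¹ ⊆ I Fₖ`. Since `g` is weakly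
regular on the free module `Fₖ`, the Koszul complex `K(g; Fₖ)` is acyclic, and the long exact
homology sequence gives `H_{ℓ+1}(g; Ωᵏ) ≅ H_ℓ(g; Ωᵏ⁺¹)`; in degree `ℓ = 0` this also uses that
`H₀(g; Ωᵏ⁺¹) → H₀(g; Fₖ)` vanishes because `Ωᵏ⁺¹ ⊆ I Fₖ`. Hence
`H_ℓ(g; M) ≅ H₀(g; Ωˡ) = Ωˡ / I Ωˡ`, which is `F_ℓ / I F_ℓ ≅ F_ℓ ⊗ Q/I` because the kernel
`Ωˡ⁺¹` of `F_ℓ → Ωˡ` lies in `I F_ℓ`.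
-/

open scoped TensorProduct

/-- The degree-`i` differential of the Koszul complex on the sequence `g` with
coefficients in `M`, modelled on functions on `i`-element subsets of `Fin s`. -/
noncomputable def koszulD (Q : Type*) [CommRing Q] {s : ℕ} (g : Fin s → Q)
    (M : Type*) [AddCommGroup M] [Module Q M] (i : ℕ) :
    ({t : Finset (Fin s) // t.card = i + 1} → M) →ₗ[Q]
      ({t : Finset (Fin s) // t.card = i} → M) :=
  LinearMap.pi fun T => ∑ j : Fin s,
    if hj : j ∈ T.1 then 0
    else ((-1 : Q) ^ (T.1.filter (fun a => a < j)).card * g j) •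
      LinearMap.proj (⟨insert j T.1, by
        rw [Finset.card_insert_of_notMem hj, T.2]⟩ :
          {t : Finset (Fin s) // t.card = i + 1})

/-- Koszul cycles in homological degree `ℓ`. -/
noncomputable def koszulCycles (Q : Type*) [CommRing Q] {s : ℕ} (g : Fin s → Q)
    (M : Type*) [AddCommGroup M] [Module Q M] :
    (ℓ : ℕ) → Submodule Q ({t : Finset (Fin s) // t.card = ℓ} → M)
  | 0 => ⊤
  | (n + 1) => LinearMap.ker (koszulD Q g M n)

/-- The Koszul homology `H_ℓ(g; M)`: cycles modulo boundaries. -/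
noncomputable abbrev KoszulHomology (Q : Type*) [CommRing Q] {s : ℕ} (g : Fin s → Q)
    (M : Type*) [AddCommGroup M] [Module Q M] (ℓ : ℕ) :=
  (koszulCycles Q g M ℓ) ⧸
    ((LinearMap.range (koszulD Q g M ℓ)).comap (koszulCycles Q g M ℓ).subtype)

abbrev KoszulChain (s i : ℕ) (N : Type*) := {t : Finset (Fin s) // t.card = i} → N

section Differential

variable {Q : Type*} [CommRing Q] {s : ℕ} (g : Fin s → Q)
  {M N : Type*} [AddCommGroup M] [Module Q M] [AddCommGroup N] [Module Q N]

lemma koszulD_apply (i : ℕ) (c : KoszulChain s (i + 1) N) (T : {t : Finset (Fin s) // t.card = i}) :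
    koszulD Q g N i c T = ∑ j : Fin s,
      if hj : j ∈ T.1 then 0
      else ((-1 : Q) ^ (T.1.filter (fun a => a < j)).card * g j) •
        c ⟨insert j T.1, by rw [Finset.card_insert_of_notMem hj, T.2]⟩ := by
  simp only [koszulD, LinearMap.pi_apply, LinearMap.sum_apply]
  refine Finset.sum_congr rfl fun j _ => ?_
  split <;> simp

lemma koszulD_compLeft (f : M →ₗ[Q] N) (i : ℕ) (c : KoszulChain s (i + 1) M) :
    koszulD Q g N i (f.compLeft _ c) = f.compLeft _ (koszulD Q g M i c) := by
  funext T
  simp only [LinearMap.compLeft_apply, Function.comp_apply, koszulD_apply, map_sum]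
  refine Finset.sum_congr rfl fun j _ => ?_
  split <;> simp

lemma mem_ideal_span_range_smul_top_iff {ι : Type*} [Fintype ι] (f : ι → Q) (x : N) :
    x ∈ Ideal.span (Set.range f) • (⊤ : Submodule Q N) ↔ ∃ m : ι → N, ∑ j, f j • m j = x := by
  refine ⟨fun hx => ?_, ?_⟩
  · refine Submodule.smul_induction_on hx (fun r hr n _ => ?_) ?_
    · obtain ⟨c, rfl⟩ := Ideal.mem_span_range_iff_exists_fun.1 hr
      exact ⟨fun j => c j • n, by simp [Finset.sum_smul, smul_smul, mul_comm]⟩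
    · rintro _ _ ⟨m, rfl⟩ ⟨m', rfl⟩
      exact ⟨m + m', by simp [smul_add, Finset.sum_add_distrib]⟩
  · rintro ⟨m, rfl⟩
    exact Submodule.sum_mem _ fun j _ =>
      Submodule.smul_mem_smul (Ideal.subset_span ⟨j, rfl⟩) trivial

lemma mem_range_koszulD_zero_iff (w : KoszulChain s 0 N) :
    w ∈ LinearMap.range (koszulD Q g N 0) ↔
      ∀ T, w T ∈ Ideal.span (Set.range g) • (⊤ : Submodule Q N) := by
  have hT : ∀ T : {t : Finset (Fin s) // t.card = 0}, T = ⟨∅, rfl⟩ :=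
    fun T => Subtype.ext (Finset.card_eq_zero.mp T.2)
  refine ⟨?_, fun hw => ?_⟩
  · rintro ⟨c, rfl⟩ T
    rw [koszulD_apply]
    refine Submodule.sum_mem _ fun j _ => ?_
    split
    · exact Submodule.zero_mem _
    · rw [mul_smul]
      exact Submodule.smul_mem _ _
        (Submodule.smul_mem_smul (Ideal.subset_span ⟨j, rfl⟩) trivial)
  · obtain ⟨m, hm⟩ := (mem_ideal_span_range_smul_top_iff g _).1 (hw ⟨∅, rfl⟩)
    -- on one-element subsets `{j}` this chain takes the value `m j`
    refine ⟨fun t => ∑ j ∈ t.1, m j, funext fun T => ?_⟩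
    rw [hT T, koszulD_apply, ← hm]
    simp

end Differential

namespace Finset

variable {s : ℕ}

noncomputable def preimageCastSucc (T : Finset (Fin (s + 1))) : Finset (Fin s) :=
  T.preimage Fin.castSucc (Fin.castSucc_injective s).injOn

@[simp] lemma mem_preimageCastSucc {T : Finset (Fin (s + 1))} {j : Fin s} :
    j ∈ T.preimageCastSucc ↔ j.castSucc ∈ T :=
  mem_preimage

lemma last_notMem_map_castSuccEmb (t : Finset (Fin s)) : Fin.last s ∉ t.map Fin.castSuccEmb := by
  simp [Fin.castSucc_ne_last]

@[simp] lemma preimageCastSucc_map (t : Finset (Fin s)) :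
    (t.map Fin.castSuccEmb).preimageCastSucc = t := by
  ext j; simp

@[simp] lemma preimageCastSucc_insert_last (T : Finset (Fin (s + 1))) :
    (insert (Fin.last s) T).preimageCastSucc = T.preimageCastSucc := by
  ext j; simp [Fin.castSucc_ne_last]

lemma map_preimageCastSucc {T : Finset (Fin (s + 1))} (h : Fin.last s ∉ T) :
    T.preimageCastSucc.map Fin.castSuccEmb = T := by
  ext x
  induction x using Fin.lastCases with
  | last => simp [h, Fin.castSucc_ne_last]
  | cast j => simp

lemma insert_last_map_preimageCastSucc {T : Finset (Fin (s + 1))} (h : Fin.last s ∈ T) :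
    insert (Fin.last s) (T.preimageCastSucc.map Fin.castSuccEmb) = T := by
  ext x
  induction x using Fin.lastCases with
  | last => simp [h]
  | cast j => simp [Fin.castSucc_ne_last]

lemma card_preimageCastSucc_of_notMem {T : Finset (Fin (s + 1))} (h : Fin.last s ∉ T) :
    T.preimageCastSucc.card = T.card := by
  conv_rhs => rw [← map_preimageCastSucc h]
  rw [card_map]

lemma card_preimageCastSucc_of_mem {T : Finset (Fin (s + 1))} (h : Fin.last s ∈ T) :
    T.preimageCastSucc.card + 1 = T.card := by
  conv_rhs => rw [← insert_last_map_preimageCastSucc h]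
  rw [card_insert_of_notMem (last_notMem_map_castSuccEmb _), card_map]

lemma card_filter_lt_castSucc_map (t : Finset (Fin s)) (j : Fin s) :
    ((t.map Fin.castSuccEmb).filter (· < j.castSucc)).card = (t.filter (· < j)).card := by
  rw [filter_map, card_map]
  rfl

lemma card_filter_lt_last_map (t : Finset (Fin s)) :
    ((t.map Fin.castSuccEmb).filter (· < Fin.last s)).card = t.card := by
  rw [filter_true_of_mem (by simp [Fin.castSucc_lt_last]), card_map]

end Finset

/- A chain on `Fin (s + 1)` is determined by its restrictions to the subsets avoiding and
containing `Fin.last s`; in these terms `K(g; N)` is the mapping cone of multiplication by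
`g (Fin.last s)` on `K(Fin.init g; N)`. -/
namespace KoszulChain

open Finset

variable {s : ℕ} {N : Type*}

def omitLast {i : ℕ} (c : KoszulChain (s + 1) i N) : KoszulChain s i N :=
  fun t => c ⟨t.1.map Fin.castSuccEmb, by rw [card_map, t.2]⟩

def withLast {i : ℕ} (c : KoszulChain (s + 1) (i + 1) N) : KoszulChain s i N :=
  fun t => c ⟨insert (Fin.last s) (t.1.map Fin.castSuccEmb), by
    rw [card_insert_of_notMem (last_notMem_map_castSuccEmb t.1), card_map, t.2]⟩

noncomputable def glue {i : ℕ} (a : KoszulChain s (i + 1) N) (b : KoszulChain s i N) :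
    KoszulChain (s + 1) (i + 1) N := fun T =>
  if h : Fin.last s ∈ T.1 then
    b ⟨T.1.preimageCastSucc, by have := card_preimageCastSucc_of_mem h; omega⟩
  else
    a ⟨T.1.preimageCastSucc, (card_preimageCastSucc_of_notMem h).trans T.2⟩

@[simp] lemma omitLast_glue {i : ℕ} (a : KoszulChain s (i + 1) N) (b : KoszulChain s i N) :
    omitLast (glue a b) = a := by
  funext t
  simp only [omitLast, glue, dif_neg (last_notMem_map_castSuccEmb t.1)]
  exact congrArg a (Subtype.ext (preimageCastSucc_map t.1))

@[simp] lemma withLast_glue {i : ℕ} (a : KoszulChain s (i + 1) N) (b : KoszulChain s i N) :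
    withLast (glue a b) = b := by
  funext t
  simp only [withLast, glue, dif_pos (mem_insert_self _ _)]
  exact congrArg b (Subtype.ext (by simp))

@[simp] lemma glue_omitLast_withLast {i : ℕ} (c : KoszulChain (s + 1) (i + 1) N) :
    glue (omitLast c) (withLast c) = c := by
  funext T
  unfold glue
  split_ifs with h
  · exact congrArg c (Subtype.ext (insert_last_map_preimageCastSucc h))
  · exact congrArg c (Subtype.ext (map_preimageCastSucc h))

lemma ext_omitLast_withLast {i : ℕ} {c c' : KoszulChain (s + 1) (i + 1) N}
    (hA : omitLast c = omitLast c') (hB : withLast c = withLast c') : c = c' := by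
  rw [← glue_omitLast_withLast c, ← glue_omitLast_withLast c', hA, hB]

lemma ext_omitLast {c c' : KoszulChain (s + 1) 0 N}
    (h : omitLast c = omitLast c') : c = c' := by
  funext T
  obtain rfl : T = ⟨∅, rfl⟩ := Subtype.ext (card_eq_zero.mp T.2)
  exact congrFun h ⟨∅, rfl⟩

end KoszulChain

section Split

open Finset KoszulChain

variable {Q : Type*} [CommRing Q] {s : ℕ} (g : Fin (s + 1) → Q)
  {N : Type*} [AddCommGroup N] [Module Q N]

lemma omitLast_koszulD (i : ℕ) (c : KoszulChain (s + 1) (i + 1) N) :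
    omitLast (koszulD Q g N i c) =
      koszulD Q (Fin.init g) N i (omitLast c) + ((-1 : Q) ^ i * g (Fin.last s)) • withLast c := by
  funext t
  simp only [omitLast, withLast, Pi.add_apply, Pi.smul_apply]
  rw [koszulD_apply, koszulD_apply, Fin.sum_univ_castSucc,
    dif_neg (last_notMem_map_castSuccEmb t.1), card_filter_lt_last_map]
  congr 1
  · refine sum_congr rfl fun j _ => ?_
    by_cases hj : j ∈ t.1
    · simp [hj]
    · rw [dif_neg (by simpa using hj), dif_neg hj, card_filter_lt_castSucc_map]
      exact congrArg _ (congrArg c (Subtype.ext (map_insert _ _ _).symm))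
  · rw [t.2]

lemma withLast_koszulD (i : ℕ) (c : KoszulChain (s + 1) (i + 1 + 1) N) :
    withLast (koszulD Q g N (i + 1) c) = koszulD Q (Fin.init g) N i (withLast c) := by
  funext t
  simp only [withLast]
  rw [koszulD_apply, koszulD_apply, Fin.sum_univ_castSucc, dif_pos (mem_insert_self _ _),
    add_zero]
  refine sum_congr rfl fun j _ => ?_
  by_cases hj : j ∈ t.1
  · simp [hj]
  · rw [dif_neg (by simpa [Fin.castSucc_ne_last] using hj), dif_neg hj, filter_insert,
      if_neg (not_lt.mpr (Fin.castSucc_lt_last j).le), card_filter_lt_castSucc_map]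
    refine congrArg _ (congrArg c (Subtype.ext ?_))
    simp only [map_insert, Fin.castSuccEmb_apply]
    exact insert_comm _ _ _

end Split

section Exactness

open KoszulChain RingTheory.Sequence

variable {Q : Type*} [CommRing Q] {N : Type*} [AddCommGroup N] [Module Q N]

theorem koszulD_koszulD {s : ℕ} (g : Fin s → Q) (i : ℕ) (c : KoszulChain s (i + 1 + 1) N) :
    koszulD Q g N i (koszulD Q g N (i + 1) c) = 0 := by
  induction s generalizing i with
  | zero => funext T; simp [koszulD_apply]
  | succ s ih =>
    have hA : omitLast (koszulD Q g N i (koszulD Q g N (i + 1) c)) = omitLast 0 := by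
      rw [omitLast_koszulD, omitLast_koszulD, withLast_koszulD, map_add, map_smul, ih,
        zero_add, ← add_smul, pow_succ]
      simp only [mul_neg_one, neg_mul, neg_add_cancel, zero_smul]
      rfl
    cases i with
    | zero => exact ext_omitLast hA
    | succ i =>
      refine ext_omitLast_withLast hA ?_
      rw [withLast_koszulD, withLast_koszulD, ih]
      rfl

lemma Ideal.ofList_ofFn {s : ℕ} (g : Fin s → Q) :
    Ideal.ofList (List.ofFn g) = Ideal.span (Set.range g) := by
  simp [Ideal.ofList, Set.range]

lemma RingTheory.Sequence.isWeaklyRegular_ofFn_succ_iff {s : ℕ} (g : Fin (s + 1) → Q) :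
    IsWeaklyRegular N (List.ofFn g) ↔ IsWeaklyRegular N (List.ofFn (Fin.init g)) ∧
      IsSMulRegular (N ⧸ Ideal.span (Set.range (Fin.init g)) • (⊤ : Submodule Q N))
        (g (Fin.last s)) := by
  rw [List.ofFn_succ', List.concat_eq_append, isWeaklyRegular_append_iff,
    isWeaklyRegular_singleton_iff, Ideal.ofList_ofFn]
  rfl

lemma withLast_mem_range_koszulD_zero {s : ℕ} {g : Fin (s + 1) → Q}
    (hlast : IsSMulRegular (N ⧸ Ideal.span (Set.range (Fin.init g)) • (⊤ : Submodule Q N))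
      (g (Fin.last s)))
    {c : KoszulChain (s + 1) 1 N} (hc : koszulD Q g N 0 c = 0) :
    withLast c ∈ LinearMap.range (koszulD Q (Fin.init g) N 0) := by
  refine (mem_range_koszulD_zero_iff _ _).2 fun T => ?_
  have hmem : g (Fin.last s) • withLast c T ∈
      Ideal.span (Set.range (Fin.init g)) • (⊤ : Submodule Q N) := by
    have hT := congrFun (omitLast_koszulD g 0 c) T
    simp only [hc, pow_zero, one_mul, Pi.add_apply, Pi.smul_apply] at hT
    rw [eq_neg_of_add_eq_zero_right hT.symm]
    exact neg_mem ((mem_range_koszulD_zero_iff _ _).1 ⟨_, rfl⟩ T)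
  rw [← Submodule.Quotient.mk_eq_zero]
  refine hlast.right_eq_zero_of_smul ?_
  rwa [← Submodule.Quotient.mk_smul, Submodule.Quotient.mk_eq_zero]

theorem mem_range_koszulD_of_isWeaklyRegular {s : ℕ} {g : Fin s → Q}
    (hg : IsWeaklyRegular N (List.ofFn g)) {i : ℕ} {c : KoszulChain s (i + 1) N}
    (hc : koszulD Q g N i c = 0) : c ∈ LinearMap.range (koszulD Q g N (i + 1)) := by
  induction s generalizing i with
  | zero =>
    refine ⟨0, funext fun T => absurd T.2 ?_⟩
    have := T.1.card_le_univ
    rw [Fintype.card_fin] at this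
    omega
  | succ s ih =>
    obtain ⟨hinit, hlast⟩ := (isWeaklyRegular_ofFn_succ_iff g).1 hg
    set ε : Q := (-1) ^ i * g (Fin.last s)
    have hA : koszulD Q (Fin.init g) N i (omitLast c) + ε • withLast c = 0 := by
      rw [← omitLast_koszulD, hc]
      rfl
    obtain ⟨b, hb⟩ : withLast c ∈ LinearMap.range (koszulD Q (Fin.init g) N i) := by
      cases i with
      | zero => exact withLast_mem_range_koszulD_zero hlast hc
      | succ i =>
        refine ih hinit ?_
        rw [← withLast_koszulD, hc]
        rfl
    obtain ⟨a, ha⟩ : omitLast c + ε • b ∈ LinearMap.range (koszulD Q (Fin.init g) N (i + 1)) :=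
      ih hinit (by rw [map_add, map_smul, hb, hA])
    refine ⟨glue a b, ext_omitLast_withLast ?_ ?_⟩
    · rw [omitLast_koszulD, omitLast_glue, withLast_glue, ha, pow_succ]
      simp only [ε, mul_neg_one, neg_mul, neg_smul, add_neg_cancel_right]
    · rw [withLast_koszulD, withLast_glue, hb]

end Exactness

section DegreeZero

variable {Q : Type*} [CommRing Q] {s : ℕ} (g : Fin s → Q)
  {F M N : Type*} [AddCommGroup F] [Module Q F] [AddCommGroup M] [Module Q M]
  [AddCommGroup N] [Module Q N]

noncomputable def koszulHomologyZeroEquiv :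
    KoszulHomology Q g N 0 ≃ₗ[Q] N ⧸ (Ideal.span (Set.range g) • ⊤ : Submodule Q N) :=
  let χ := (Ideal.span (Set.range g) • ⊤ : Submodule Q N).mkQ ∘ₗ
    LinearMap.proj ⟨∅, rfl⟩ ∘ₗ (koszulCycles Q g N 0).subtype
  have hχ : Function.Surjective χ := by
    intro x
    obtain ⟨m, rfl⟩ := Submodule.Quotient.mk_surjective _ x
    exact ⟨⟨fun _ => m, trivial⟩, rfl⟩
  have hker : LinearMap.ker χ =
      (LinearMap.range (koszulD Q g N 0)).comap (koszulCycles Q g N 0).subtype := by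
    ext z
    simp only [χ, LinearMap.mem_ker, Submodule.mem_comap, mem_range_koszulD_zero_iff,
      LinearMap.comp_apply, Submodule.mkQ_apply, Submodule.Quotient.mk_eq_zero]
    refine ⟨fun h T => ?_, fun h => h _⟩
    rwa [show T = ⟨∅, rfl⟩ from Subtype.ext (Finset.card_eq_zero.mp T.2)]
  Submodule.quotEquivOfEq _ _ hker.symm ≪≫ₗ χ.quotKerEquivOfSurjective hχ

noncomputable def quotSMulTopEquivOfSurjective (I : Ideal Q) {π : F →ₗ[Q] M}
    (hπ : Function.Surjective π) (hker : LinearMap.ker π ≤ I • ⊤) :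
    (F ⧸ (I • ⊤ : Submodule Q F)) ≃ₗ[Q] M ⧸ (I • ⊤ : Submodule Q M) :=
  have hker' : LinearMap.ker ((I • ⊤ : Submodule Q M).mkQ ∘ₗ π) = I • ⊤ := by
    rw [LinearMap.ker_comp, Submodule.ker_mkQ, ← LinearMap.range_eq_top.mpr hπ,
      LinearMap.range_eq_map, ← Submodule.map_smul'', Submodule.comap_map_eq,
      sup_eq_left.mpr hker]
  Submodule.quotEquivOfEq _ _ hker'.symm ≪≫ₗ
    LinearMap.quotKerEquivOfSurjective _ ((Submodule.mkQ_surjective _).comp hπ)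

noncomputable def koszulHomologyZeroEquivTensor {π : F →ₗ[Q] M} (hπ : Function.Surjective π)
    (hker : LinearMap.ker π ≤ Ideal.span (Set.range g) • ⊤) :
    KoszulHomology Q g M 0 ≃ₗ[Q] F ⊗[Q] (Q ⧸ Ideal.span (Set.range g)) :=
  koszulHomologyZeroEquiv g ≪≫ₗ (quotSMulTopEquivOfSurjective _ hπ hker).symm ≪≫ₗ
    (TensorProduct.tensorQuotEquivQuotSMul F _).symm

end DegreeZero

lemma Function.Exact.linearMap_compLeft {Q K F M : Type*} [CommRing Q] [AddCommGroup K]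
    [Module Q K] [AddCommGroup F] [Module Q F] [AddCommGroup M] [Module Q M]
    {ι : K →ₗ[Q] F} {π : F →ₗ[Q] M} (h : Function.Exact ι π) (T : Type*) :
    Function.Exact (ι.compLeft T) (π.compLeft T) := by
  intro x
  refine ⟨fun hx => ?_, ?_⟩
  · choose y hy using fun t => (h (x t)).1 (congrFun hx t)
    exact ⟨y, funext hy⟩
  · rintro ⟨y, rfl⟩
    exact funext fun t => h.apply_apply_eq_zero (y t)

section Cycles

open RingTheory.Sequence

variable {Q : Type*} [CommRing Q] {s : ℕ} (g : Fin s → Q)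
  {M N : Type*} [AddCommGroup M] [Module Q M] [AddCommGroup N] [Module Q N]

lemma mem_koszulCycles_succ {ℓ : ℕ} {c : KoszulChain s (ℓ + 1) N} :
    c ∈ koszulCycles Q g N (ℓ + 1) ↔ koszulD Q g N ℓ c = 0 :=
  Iff.rfl

lemma koszulD_mem_koszulCycles (ℓ : ℕ) (c : KoszulChain s (ℓ + 1) N) :
    koszulD Q g N ℓ c ∈ koszulCycles Q g N ℓ := by
  cases ℓ with
  | zero => trivial
  | succ ℓ => exact koszulD_koszulD g ℓ c

lemma mem_koszulCycles_of_compLeft {f : M →ₗ[Q] N} (hf : Function.Injective f) {ℓ : ℕ}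
    {c : KoszulChain s ℓ M} (hc : f.compLeft _ c ∈ koszulCycles Q g N ℓ) :
    c ∈ koszulCycles Q g M ℓ := by
  cases ℓ with
  | zero => trivial
  | succ ℓ =>
    rw [mem_koszulCycles_succ, koszulD_compLeft] at hc
    exact hf.comp_left (hc.trans (f.compLeft _).map_zero.symm)

lemma range_koszulD_eq_map_compLeft {f : M →ₗ[Q] N} (hf : Function.Surjective f) (i : ℕ) :
    LinearMap.range (koszulD Q g N i) =
      (LinearMap.range (koszulD Q g M i)).map (f.compLeft _) := by
  have hcomm : f.compLeft _ ∘ₗ koszulD Q g M i = koszulD Q g N i ∘ₗ f.compLeft _ :=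
    LinearMap.ext fun c => (koszulD_compLeft g f i c).symm
  rw [← LinearMap.range_comp, hcomm, LinearMap.range_comp (f.compLeft _),
    (LinearMap.range_eq_top (f := f.compLeft _)).mpr hf.comp_left, Submodule.map_top]

theorem mem_range_koszulD_of_mem_koszulCycles (hg : IsWeaklyRegular N (List.ofFn g)) {ℓ : ℕ}
    {c : KoszulChain s ℓ N} (hc : c ∈ koszulCycles Q g N ℓ)
    (hcg : ∀ T, c T ∈ Ideal.span (Set.range g) • (⊤ : Submodule Q N)) :
    c ∈ LinearMap.range (koszulD Q g N ℓ) := by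
  cases ℓ with
  | zero => exact (mem_range_koszulD_zero_iff g c).2 hcg
  | succ ℓ => exact mem_range_koszulD_of_isWeaklyRegular hg hc

end Cycles

section Connecting

open RingTheory.Sequence

variable {Q : Type*} [CommRing Q] {s : ℕ} (g : Fin s → Q)
  {K F M : Type*} [AddCommGroup K] [Module Q K] [AddCommGroup F] [Module Q F]
  [AddCommGroup M] [Module Q M] {ι : K →ₗ[Q] F} {π : F →ₗ[Q] M} (ℓ : ℕ)

variable (ι) in
/-- For `0 → K → F → M → 0`, both `H_{ℓ+1}(g; M)` and `H_ℓ(g; K)` are quotients of this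
module, and the connecting isomorphism comes from comparing the two kernels. -/
noncomputable def koszulLiftedChains : Submodule Q (KoszulChain s (ℓ + 1) F) :=
  (LinearMap.range (ι.compLeft _)).comap (koszulD Q g F ℓ)

noncomputable def koszulLiftedChains.toHomologySucc (hιπ : Function.Exact ι π) :
    koszulLiftedChains g ι ℓ →ₗ[Q] KoszulHomology Q g M (ℓ + 1) :=
  Submodule.mkQ _ ∘ₗ (π.compLeft _).restrict (q := koszulCycles Q g M (ℓ + 1)) fun u hu => by
    obtain ⟨v, hv⟩ := hu
    rw [mem_koszulCycles_succ, koszulD_compLeft, ← hv]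
    exact (hιπ.linearMap_compLeft _).apply_apply_eq_zero v

noncomputable def koszulLiftedChains.boundaryPreimage (hι : Function.Injective ι) :
    koszulLiftedChains g ι ℓ →ₗ[Q] KoszulChain s ℓ K :=
  (LinearEquiv.ofInjective (ι.compLeft _) hι.comp_left).symm.toLinearMap ∘ₗ
    (koszulD Q g F ℓ ∘ₗ (koszulLiftedChains g ι ℓ).subtype).codRestrict _ fun u => u.2

lemma koszulLiftedChains.compLeft_boundaryPreimage (hι : Function.Injective ι)
    (u : koszulLiftedChains g ι ℓ) :
    ι.compLeft _ (boundaryPreimage g ℓ hι u) = koszulD Q g F ℓ u := by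
  have := (LinearEquiv.ofInjective (ι.compLeft _) hι.comp_left).apply_symm_apply
    ⟨koszulD Q g F ℓ u, u.2⟩
  exact congrArg Subtype.val this

noncomputable def koszulLiftedChains.toHomology (hι : Function.Injective ι) :
    koszulLiftedChains g ι ℓ →ₗ[Q] KoszulHomology Q g K ℓ :=
  Submodule.mkQ _ ∘ₗ (boundaryPreimage g ℓ hι).codRestrict _ fun u =>
    mem_koszulCycles_of_compLeft g hι (by
      rw [compLeft_boundaryPreimage]
      exact koszulD_mem_koszulCycles g ℓ u.1)

namespace koszulLiftedChains

lemma toHomologySucc_surjective (hιπ : Function.Exact ι π) (hπ : Function.Surjective π) :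
    Function.Surjective (toHomologySucc g ℓ hιπ) := by
  intro h
  obtain ⟨⟨c, hc⟩, rfl⟩ := Submodule.mkQ_surjective _ h
  obtain ⟨u, rfl⟩ := hπ.comp_left c
  have hu : u ∈ koszulLiftedChains g ι ℓ := by
    refine ((hιπ.linearMap_compLeft _) _).1 ?_
    rw [← koszulD_compLeft]
    exact hc
  exact ⟨⟨u, hu⟩, rfl⟩

lemma toHomology_surjective (hι : Function.Injective ι)
    (hF : IsWeaklyRegular F (List.ofFn g))
    (hK : LinearMap.range ι ≤ Ideal.span (Set.range g) • ⊤) :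
    Function.Surjective (toHomology g ℓ hι) := by
  intro h
  obtain ⟨⟨z, hz⟩, rfl⟩ := Submodule.mkQ_surjective _ h
  have hcyc : ι.compLeft _ z ∈ koszulCycles Q g F ℓ := by
    cases ℓ with
    | zero => trivial
    | succ ℓ =>
      rw [mem_koszulCycles_succ, koszulD_compLeft]
      exact (congrArg (ι.compLeft _) hz).trans (map_zero _)
  obtain ⟨u, hu⟩ := mem_range_koszulD_of_mem_koszulCycles g hF hcyc
    fun T => hK ⟨z T, rfl⟩
  refine ⟨⟨u, z, hu.symm⟩, congrArg _ (Subtype.ext (hι.comp_left ?_))⟩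
  exact (compLeft_boundaryPreimage g ℓ hι _).trans hu

lemma ker_toHomologySucc (hιπ : Function.Exact ι π) (hπ : Function.Surjective π) :
    LinearMap.ker (toHomologySucc g ℓ hιπ) =
      (LinearMap.range (ι.compLeft _) ⊔ LinearMap.range (koszulD Q g F (ℓ + 1))).comap
        (koszulLiftedChains g ι ℓ).subtype := by
  have hcomap : (LinearMap.range (koszulD Q g M (ℓ + 1))).comap (π.compLeft _) =
      LinearMap.range (ι.compLeft _) ⊔ LinearMap.range (koszulD Q g F (ℓ + 1)) := by
    rw [range_koszulD_eq_map_compLeft g hπ, Submodule.comap_map_eq,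
      (hιπ.linearMap_compLeft _).linearMap_ker_eq, sup_comm]
  ext u
  rw [Submodule.mem_comap, ← hcomap]
  simp [toHomologySucc, Submodule.Quotient.mk_eq_zero]

lemma ker_toHomology (hι : Function.Injective ι) (hF : IsWeaklyRegular F (List.ofFn g)) :
    LinearMap.ker (toHomology g ℓ hι) =
      (LinearMap.range (ι.compLeft _) ⊔ LinearMap.range (koszulD Q g F (ℓ + 1))).comap
        (koszulLiftedChains g ι ℓ).subtype := by
  ext u
  have hδ := compLeft_boundaryPreimage g ℓ hι u
  simp only [toHomology, LinearMap.mem_ker, LinearMap.comp_apply, Submodule.mkQ_apply,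
    Submodule.Quotient.mk_eq_zero, Submodule.mem_comap, Submodule.subtype_apply,
    LinearMap.codRestrict_apply]
  constructor
  · rintro ⟨v, hv⟩
    have hcyc : koszulD Q g F ℓ (u.1 - ι.compLeft _ v) = 0 := by
      rw [map_sub, koszulD_compLeft, hv, hδ, sub_self]
    obtain ⟨w, hw⟩ := mem_range_koszulD_of_isWeaklyRegular hF hcyc
    exact Submodule.mem_sup.2 ⟨_, ⟨v, rfl⟩, _, ⟨w, rfl⟩, by rw [hw, add_sub_cancel]⟩
  · intro hu
    obtain ⟨_, ⟨v, rfl⟩, _, ⟨w, rfl⟩, huvw⟩ := Submodule.mem_sup.1 hu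
    refine ⟨v, hι.comp_left ?_⟩
    change ι.compLeft _ (koszulD Q g K ℓ v) = ι.compLeft _ _
    rw [← koszulD_compLeft, hδ, ← huvw, map_add, koszulD_koszulD, add_zero]

end koszulLiftedChains

open koszulLiftedChains in
noncomputable def koszulHomologySuccEquiv (hι : Function.Injective ι) (hπ : Function.Surjective π)
    (hιπ : Function.Exact ι π) (hF : IsWeaklyRegular F (List.ofFn g))
    (hK : LinearMap.range ι ≤ Ideal.span (Set.range g) • ⊤) :
    KoszulHomology Q g M (ℓ + 1) ≃ₗ[Q] KoszulHomology Q g K ℓ :=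
  ((toHomologySucc g ℓ hιπ).quotKerEquivOfSurjective (toHomologySucc_surjective g ℓ hιπ hπ)).symm
    ≪≫ₗ Submodule.quotEquivOfEq _ _
      ((ker_toHomologySucc g ℓ hιπ hπ).trans (ker_toHomology g ℓ hι hF).symm)
    ≪≫ₗ (toHomology g ℓ hι).quotKerEquivOfSurjective (toHomology_surjective g ℓ hι hF hK)

noncomputable def koszulHomologySuccEquivSyzygy (hπ : Function.Surjective π)
    {K : Submodule Q F} (hker : LinearMap.ker π = K) (hF : IsWeaklyRegular F (List.ofFn g))
    (hK : K ≤ Ideal.span (Set.range g) • ⊤) :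
    KoszulHomology Q g M (ℓ + 1) ≃ₗ[Q] KoszulHomology Q g K ℓ :=
  koszulHomologySuccEquiv g ℓ K.injective_subtype hπ
    (LinearMap.exact_iff.mpr (by rw [hker, Submodule.range_subtype])) hF
    (by rwa [Submodule.range_subtype])

end Connecting

section Resolution

open RingTheory.Sequence

variable {Q : Type*} [CommRing Q]

lemma RingTheory.Sequence.isWeaklyRegular_of_flat {rs : List Q} (h : IsWeaklyRegular Q rs)
    (F : Type*) [AddCommGroup F] [Module Q F] [Module.Flat Q F] : IsWeaklyRegular F rs :=
  (TensorProduct.rid Q F).isWeaklyRegular_congr rs |>.mp h.isWeaklyRegular_lTensor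

theorem nonempty_koszulHomology_range_equiv_tensor {s : ℕ} (g : Fin s → Q)
    (hg : IsWeaklyRegular Q (List.ofFn g)) (b : ℕ → ℕ)
    (d : ∀ i : ℕ, (Fin (b (i + 1)) → Q) →ₗ[Q] (Fin (b i) → Q))
    (hex : ∀ i, LinearMap.ker (d i) = LinearMap.range (d (i + 1)))
    (hwci : ∀ i, LinearMap.range (d i) ≤ (Ideal.span (Set.range g)) • ⊤) (ℓ k : ℕ) :
    Nonempty (KoszulHomology Q g (LinearMap.range (d k)) ℓ ≃ₗ[Q]
      ((Fin (b (ℓ + k + 1)) → Q) ⊗[Q] (Q ⧸ Ideal.span (Set.range g)))) := by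
  have hker : ∀ k, LinearMap.ker (d k).rangeRestrict = LinearMap.range (d (k + 1)) :=
    fun k => (LinearMap.ker_rangeRestrict _).trans (hex k)
  induction ℓ generalizing k with
  | zero =>
    rw [Nat.zero_add]
    exact ⟨koszulHomologyZeroEquivTensor g (d k).surjective_rangeRestrict
      ((hker k).le.trans (hwci _))⟩
  | succ ℓ ih =>
    obtain ⟨e⟩ := ih (k + 1)
    rw [show ℓ + 1 + k + 1 = ℓ + (k + 1) + 1 by omega]
    exact ⟨koszulHomologySuccEquivSyzygy g ℓ (d k).surjective_rangeRestrict (hker k)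
      (isWeaklyRegular_of_flat hg _) (hwci _) ≪≫ₗ e⟩

end Resolution

theorem koszulHomology_iso_resolution_tensor_general
    {Q : Type*} [CommRing Q]
    {s : ℕ} (g : Fin s → Q)
    (hreg : RingTheory.Sequence.IsRegular Q (List.ofFn g))
    (M : Type*) [AddCommGroup M] [Module Q M]
    (b : ℕ → ℕ) (d : ∀ i : ℕ, (Fin (b (i + 1)) → Q) →ₗ[Q] (Fin (b i) → Q))
    (aug : (Fin (b 0) → Q) →ₗ[Q] M)
    (haug : Function.Surjective aug)
    (hex0 : LinearMap.ker aug = LinearMap.range (d 0))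
    (hex : ∀ i, LinearMap.ker (d i) = LinearMap.range (d (i + 1)))
    (hwci : ∀ i, LinearMap.range (d i) ≤ (Ideal.span (Set.range g)) • ⊤)
    (ℓ : ℕ) :
    Nonempty ((KoszulHomology Q g M ℓ) ≃ₗ[Q]
      ((Fin (b ℓ) → Q) ⊗[Q] (Q ⧸ Ideal.span (Set.range g)))) := by
  cases ℓ with
  | zero => exact ⟨koszulHomologyZeroEquivTensor g haug (hex0.le.trans (hwci 0))⟩
  | succ ℓ =>
    have hg := hreg.toIsWeaklyRegular
    obtain ⟨e⟩ := nonempty_koszulHomology_range_equiv_tensor g hg b d hex hwci ℓ 0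
    exact ⟨koszulHomologySuccEquivSyzygy g ℓ haug hex0
      (RingTheory.Sequence.isWeaklyRegular_of_flat hg _) (hwci 0) ≪≫ₗ e⟩

/-- If `M` is a `g`-weak complete intersection module over the Noetherian local ring `Q`
(witnessed by a minimal free resolution `F` whose differentials land in `(g)F`), then
`H_ℓ(g;M) ≅ F_ℓ ⊗_Q Q/(g)` for every `ℓ`. -/
theorem koszulHomology_iso_resolution_tensor
    {Q : Type*} [CommRing Q] [IsNoetherianRing Q] [IsLocalRing Q]
    {s : ℕ} (g : Fin s → Q)
    (hreg : RingTheory.Sequence.IsRegular Q (List.ofFn g))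
    (M : Type*) [AddCommGroup M] [Module Q M] [Module.Finite Q M]
    (b : ℕ → ℕ) (d : ∀ i : ℕ, (Fin (b (i + 1)) → Q) →ₗ[Q] (Fin (b i) → Q))
    (aug : (Fin (b 0) → Q) →ₗ[Q] M)
    (haug : Function.Surjective aug)
    (hex0 : LinearMap.ker aug = LinearMap.range (d 0))
    (hex : ∀ i, LinearMap.ker (d i) = LinearMap.range (d (i + 1)))
    (hmin : ∀ i, LinearMap.range (d i) ≤ (IsLocalRing.maximalIdeal Q) • ⊤)
    (hwci : ∀ i, LinearMap.range (d i) ≤ (Ideal.span (Set.range g)) • ⊤)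
    (ℓ : ℕ) :
    Nonempty ((KoszulHomology Q g M ℓ) ≃ₗ[Q]
      ((Fin (b ℓ) → Q) ⊗[Q] (Q ⧸ Ideal.span (Set.range g)))) :=
  koszulHomology_iso_resolution_tensor_general g hreg M b d aug haug hex0 hex hwci ℓ
end

section
/- Let Q be a commutative Noetherian local ring and g = g_1,...,g_s a regular sequence in Q. Every finitely generated g-weak complete intersection Q-module has finite projective dimension over Q; more precisely, its projective dimension is at most s. -/
namespace GWCIAux

open RingTheory.Sequence Ideal Pointwise

universe u

variable {Q : Type u} [CommRing Q]

lemma smul_reg_pi {r : Q} (h : IsSMulRegular Q r) (n : ℕ) :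
    IsSMulRegular (Fin n → Q) r := fun u v huv => by
  funext j
  exact h (congrFun huv j)

lemma pi_zero_of_forall [Nontrivial Q] {n : ℕ} (h : ∀ x : Fin n → Q, x = 0) : n = 0 := by
  cases n with
  | zero => rfl
  | succ m => exact absurd (congrFun (h fun _ => 1) 0) one_ne_zero

noncomputable def red (J : Ideal Q) {m n : ℕ} (f : (Fin m → Q) →ₗ[Q] (Fin n → Q)) :
    (Fin m → Q ⧸ J) →ₗ[Q ⧸ J] (Fin n → Q ⧸ J) :=
  Matrix.toLin' ((LinearMap.toMatrix' f).map (Ideal.Quotient.mk J))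

lemma red_compat (J : Ideal Q) {m n : ℕ} (f : (Fin m → Q) →ₗ[Q] (Fin n → Q)) (x : Fin m → Q) :
    red J f (fun j => Ideal.Quotient.mk J (x j)) = fun j => Ideal.Quotient.mk J (f x j) := by
  have hf : f x = Matrix.mulVec (LinearMap.toMatrix' f) x := by
    rw [← Matrix.toLin'_apply, Matrix.toLin'_toMatrix']
  funext j
  rw [hf]
  simp [red, Matrix.toLin'_apply, Matrix.mulVec, dotProduct, map_sum]

lemma hI_eq (r : Q) : r • (⊤ : Submodule Q Q) = Ideal.span {r} := by
  rw [← Submodule.ideal_span_singleton_smul, Ideal.smul_eq_mul, Ideal.mul_top]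

lemma regular_quot {s : ℕ} (g : Fin (s + 1) → Q)
    (hreg : IsRegular Q (List.ofFn g)) :
    IsSMulRegular Q (g 0) ∧ IsRegular (Q ⧸ Ideal.span {g 0})
      (List.ofFn fun i : Fin s => Ideal.Quotient.mk (Ideal.span {g 0}) (g i.succ)) := by
  rw [List.ofFn_succ, isRegular_cons_iff'] at hreg
  obtain ⟨h1, h2⟩ := hreg
  refine ⟨h1, ?_⟩
  simp only [List.map_ofFn, Function.comp_def] at h2
  let e : QuotSMulTop (g 0) Q ≃ₗ[Q] Q ⧸ Ideal.span {g 0} :=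
    Submodule.quotEquivOfEq _ _ (hI_eq (g 0))
  refine (AddEquiv.isRegular_congr (e := e.toAddEquiv) ?_).mp h2
  refine List.forall₂_same.mpr fun r hr x => ?_
  obtain ⟨a, rfl⟩ := Ideal.Quotient.mk_surjective r
  obtain ⟨y, rfl⟩ := Submodule.Quotient.mk_surjective _ x
  have h3 : (Ideal.Quotient.mk (Ideal.span {g 0}) a) • (Submodule.Quotient.mk y : QuotSMulTop (g 0) Q)
      = Submodule.Quotient.mk (a • y) := rfl
  rw [h3]
  simp only [e, LinearEquiv.coe_toAddEquiv, Submodule.quotEquivOfEq_mk]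
  rfl

end GWCIAux

namespace GWCIAux2
open RingTheory.Sequence Ideal GWCIAux

universe v
variable {Q : Type v} [CommRing Q]

lemma piMk_mem_smul_top {J : Ideal Q} {s' : ℕ} {g' : Fin s' → Q ⧸ J} {I : Ideal Q}
    (hg : ∀ r ∈ I, Ideal.Quotient.mk J r ∈ Ideal.span (Set.range g'))
    {n : ℕ} {x : Fin n → Q} (hx : x ∈ I • (⊤ : Submodule Q (Fin n → Q))) :
    (fun j => Ideal.Quotient.mk J (x j)) ∈
      Ideal.span (Set.range g') • (⊤ : Submodule (Q ⧸ J) (Fin n → Q ⧸ J)) := by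
  refine Submodule.smul_induction_on hx ?_ ?_
  · intro r hr m _
    have h1 : (fun j => Ideal.Quotient.mk J ((r • m) j)) =
        (Ideal.Quotient.mk J r) • (fun j => Ideal.Quotient.mk J (m j)) := by
      funext j; simp
    rw [h1]
    exact Submodule.smul_mem_smul (hg r hr) Submodule.mem_top
  · intro x y hx hy
    have h1 : (fun j => Ideal.Quotient.mk J ((x + y) j)) =
        (fun j => Ideal.Quotient.mk J (x j)) + (fun j => Ideal.Quotient.mk J (y j)) := by
      funext j; simp
    rw [h1]
    exact add_mem hx hy

theorem aux (s : ℕ) : ∀ (Q : Type v) [CommRing Q] (g : Fin s → Q),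
    IsRegular Q (List.ofFn g) →
    ∀ (b : ℕ → ℕ) (d : ∀ i : ℕ, (Fin (b (i + 1)) → Q) →ₗ[Q] (Fin (b i) → Q)),
    (∀ i, LinearMap.ker (d i) = LinearMap.range (d (i + 1))) →
    (∀ i, LinearMap.range (d i) ≤ (Ideal.span (Set.range g)) • ⊤) →
    ∀ i, s < i → b i = 0 := by
  induction s with
  | zero =>
    intro Q _ g hreg b d hex hwci i hi
    have hQ : Nontrivial Q := hreg.nontrivial
    have hbot : Ideal.span (Set.range g) = ⊥ := by
      rw [Set.range_eq_empty, Ideal.span_empty]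
    have hle : ∀ k, LinearMap.range (d k) ≤ ⊥ := fun k => by
      have := hwci k
      rwa [hbot, Submodule.bot_smul] at this
    obtain ⟨k, rfl⟩ : ∃ k, i = k + 1 := ⟨i - 1, by omega⟩
    refine pi_zero_of_forall (Q := Q) (n := b (k + 1)) (fun x => ?_)
    have h1 : x ∈ LinearMap.ker (d k) := by
      rw [LinearMap.mem_ker]
      exact (Submodule.mem_bot Q).mp (hle k (LinearMap.mem_range_self _ x))
    rw [hex k] at h1
    exact (Submodule.mem_bot Q).mp (hle (k + 1) h1)
  | succ s IH =>
    intro Q _ g hreg b d hex hwci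
    obtain ⟨h1, h2⟩ := regular_quot g hreg
    set J : Ideal Q := Ideal.span {g 0} with hJ
    set g' : Fin s → Q ⧸ J := fun i => Ideal.Quotient.mk J (g i.succ) with hg'
    -- every element of span (range g) maps into span (range g')
    have hg : ∀ r ∈ Ideal.span (Set.range g),
        Ideal.Quotient.mk J r ∈ Ideal.span (Set.range g') := by
      have hcomap : Ideal.span (Set.range g) ≤
          Ideal.comap (Ideal.Quotient.mk J) (Ideal.span (Set.range g')) := by
        rw [Ideal.span_le]
        rintro _ ⟨i, rfl⟩
        simp only [SetLike.mem_coe, Ideal.mem_comap]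
        refine Fin.cases ?_ (fun j => ?_) i
        · have h0 : Ideal.Quotient.mk J (g 0) = 0 :=
            Ideal.Quotient.eq_zero_iff_mem.mpr (Ideal.mem_span_singleton_self _)
          rw [h0]
          exact zero_mem _
        · exact Ideal.subset_span ⟨j, rfl⟩
      exact fun r hr => hcomap hr
    -- reduced complex
    set D : ∀ i : ℕ, (Fin (b (i + 2)) → Q ⧸ J) →ₗ[Q ⧸ J] (Fin (b (i + 1)) → Q ⧸ J) :=
      fun i => red J (d (i + 1)) with hD
    have hπs : ∀ {n : ℕ} (v : Fin n → Q ⧸ J),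
        ∃ x : Fin n → Q, (fun j => Ideal.Quotient.mk J (x j)) = v := by
      intro n v
      choose x hx using fun j => Ideal.Quotient.mk_surjective (v j)
      exact ⟨x, funext hx⟩
    have hexD : ∀ i, LinearMap.ker (D i) = LinearMap.range (D (i + 1)) := by
      intro i
      apply le_antisymm
      · intro v hv
        obtain ⟨x, rfl⟩ := hπs v
        rw [LinearMap.mem_ker, hD, red_compat] at hv
        have hmem : ∀ j, d (i + 1) x j ∈ J := fun j =>
          Ideal.Quotient.eq_zero_iff_mem.mp (congrFun hv j)
        choose y hy using fun j => Ideal.mem_span_singleton'.mp (hmem j)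
        have hdx : d (i + 1) x = g 0 • y := by
          funext j
          rw [Pi.smul_apply, smul_eq_mul, mul_comm]
          exact (hy j).symm
        have hdy : d i y = 0 := by
          have hh : d (i + 1) x ∈ LinearMap.ker (d i) := by
            rw [hex i]; exact LinearMap.mem_range_self _ x
          refine smul_reg_pi h1 (b i) ?_
          show g 0 • d i y = g 0 • (0 : Fin (b i) → Q)
          rw [smul_zero, ← map_smul, ← hdx]
          exact hh
        have hy2 : y ∈ LinearMap.range (d (i + 1)) := by
          rw [← hex i]; exact hdy
        obtain ⟨z, hz⟩ := hy2
        have h5 : x - g 0 • z ∈ LinearMap.range (d (i + 2)) := by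
          rw [← hex (i + 1)]
          show d (i + 1) (x - g 0 • z) = 0
          rw [map_sub, map_smul, hz, hdx, sub_self]
        obtain ⟨w, hw⟩ := h5
        refine ⟨fun j => Ideal.Quotient.mk J (w j), ?_⟩
        rw [hD, red_compat]
        funext j
        rw [hw]
        have : (x - g 0 • z) j = x j - g 0 * z j := rfl
        rw [this, map_sub]
        have h0 : Ideal.Quotient.mk J (g 0 * z j) = 0 :=
          Ideal.Quotient.eq_zero_iff_mem.mpr
            (Ideal.mul_mem_right _ _ (Ideal.mem_span_singleton_self _))
        rw [h0, sub_zero]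
      · rintro _ ⟨v, rfl⟩
        obtain ⟨w, rfl⟩ := hπs v
        rw [LinearMap.mem_ker, hD, red_compat, red_compat]
        have hh : d (i + 1) (d (i + 2) w) = 0 := by
          have : d (i + 2) w ∈ LinearMap.ker (d (i + 1)) := by
            rw [hex (i + 1)]; exact LinearMap.mem_range_self _ w
          exact this
        funext j
        rw [hh]
        simp
    have hwciD : ∀ i, LinearMap.range (D i) ≤ Ideal.span (Set.range g') • ⊤ := by
      rintro i _ ⟨v, rfl⟩
      obtain ⟨w, rfl⟩ := hπs v
      rw [hD, red_compat]
      exact piMk_mem_smul_top hg (hwci (i + 1) (LinearMap.mem_range_self _ w))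
    have hres := IH (Q ⧸ J) g' h2 (fun i => b (i + 1)) D hexD hwciD
    intro i hi
    obtain ⟨k, rfl⟩ : ∃ k, i = k + 1 := ⟨i - 1, by omega⟩
    exact hres k (by omega)

end GWCIAux2


/-- Every finitely generated `g`-weak complete intersection module over a Noetherian
local ring (i.e. one admitting a free resolution whose differentials land in `(g)F`)
has finite projective dimension, in fact at most `s`: it admits a finite free
resolution with zero terms in homological degrees above `s`. -/
theorem gwci_finite_projective_dimension
    {Q : Type*} [CommRing Q] [IsNoetherianRing Q] [IsLocalRing Q]
    {s : ℕ} (g : Fin s → Q)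
    (hreg : RingTheory.Sequence.IsRegular Q (List.ofFn g))
    (M : Type*) [AddCommGroup M] [Module Q M] [Module.Finite Q M]
    (b : ℕ → ℕ) (d : ∀ i : ℕ, (Fin (b (i + 1)) → Q) →ₗ[Q] (Fin (b i) → Q))
    (aug : (Fin (b 0) → Q) →ₗ[Q] M)
    (haug : Function.Surjective aug)
    (hex0 : LinearMap.ker aug = LinearMap.range (d 0))
    (hex : ∀ i, LinearMap.ker (d i) = LinearMap.range (d (i + 1)))
    (hwci : ∀ i, LinearMap.range (d i) ≤ (Ideal.span (Set.range g)) • ⊤) :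
    ∃ (b' : ℕ → ℕ) (d' : ∀ i : ℕ, (Fin (b' (i + 1)) → Q) →ₗ[Q] (Fin (b' i) → Q))
      (aug' : (Fin (b' 0) → Q) →ₗ[Q] M),
      Function.Surjective aug' ∧
      LinearMap.ker aug' = LinearMap.range (d' 0) ∧
      (∀ i, LinearMap.ker (d' i) = LinearMap.range (d' (i + 1))) ∧
      (∀ i, s < i → b' i = 0) := by
  exact ⟨b, d, aug, haug, hex0, hex, GWCIAux2.aux s Q g hreg b d hex hwci⟩
end
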